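/- arXiv:2411.17628 — 2 statements merged into one kernel-verified Lean document; each statement's English description precedes it below -/
import Mathlib

section
/- Intervals in F_n^∞ are in bijection with bicolored Motzkin paths of length n-1, i.e., lattice paths in the quarter plane starting at (0,0) using steps (1,1), (1,-1), and two colored copies of (1,0), never going below the x-axis. In particular, the number of such bicolored Motzkin paths of length n-1 is C(2n-1, n). -/
/-- A Dyck path of semilength `n`, encoded as a list of booleans where
`true` is an up step `U = (1,1)` and `false` is a down step `D = (1,-1)`. -/
def IsDyckPath (n : ℕ) (w : List Bool) : Prop :=
  w.length = 2 * n ∧ w.count true = n ∧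
    ∀ p : List Bool, p <+: w → p.count false ≤ p.count true

/-- `w` avoids the consecutive pattern `DUU`. -/
def AvoidsDUU (w : List Bool) : Prop := ¬ [false, true, true] <:+: w

/-- `w` avoids `p + 1` consecutive down steps. -/
def AvoidsDrun (p : ℕ) (w : List Bool) : Prop := ¬ List.replicate (p + 1) false <:+: w

/-- The set `F_n^p` of Dyck paths of semilength `n` avoiding `DUU` and `D^{p+1}`. -/
def Fnp (p n : ℕ) : Set (List Bool) :=
  {w | IsDyckPath n w ∧ AvoidsDUU w ∧ AvoidsDrun p w}

/-- The set `F_n^∞` of Dyck paths of semilength `n` avoiding `DUU`. -/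
def Fninf (n : ℕ) : Set (List Bool) := {w | IsDyckPath n w ∧ AvoidsDUU w}

/-- The height of the path `w` after `k` steps. -/
def pathHeight (w : List Bool) (k : ℕ) : ℤ :=
  ((w.take k).count true : ℤ) - ((w.take k).count false : ℤ)

/-- The Stanley order: `P` lies weakly below `Q`. -/
def StanleyLE (P Q : List Bool) : Prop := ∀ k, pathHeight P k ≤ pathHeight Q k

/-- `Q` is obtained from `P` by replacing one factor `DU` by `UD`
(the covering relation of the Stanley lattice). -/
def CoverRel (P Q : List Bool) : Prop :=
  ∃ a b : List Bool, P = a ++ [false, true] ++ b ∧ Q = a ++ [true, false] ++ b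

/-- The number of upper covers of `P` within the set `S`. -/
noncomputable def numUpperCovers (S : Set (List Bool)) (P : List Bool) : ℕ :=
  {Q | Q ∈ S ∧ CoverRel P Q}.ncard

/-- The number of lower covers of `P` within the set `S`. -/
noncomputable def numLowerCovers (S : Set (List Bool)) (P : List Bool) : ℕ :=
  {Q | Q ∈ S ∧ CoverRel Q P}.ncard

/-- The interval `[P,Q]` inside `S` (with the Stanley order) is boolean:
it is order-isomorphic to `{0,1}^h` for some `h ≥ 0`. -/
def IsBooleanInterval (S : Set (List Bool)) (P Q : List Bool) : Prop :=
  ∃ h : ℕ, Nonempty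
    (RelIso (fun R R' : {R : List Bool // R ∈ S ∧ StanleyLE P R ∧ StanleyLE R Q} =>
        StanleyLE R.1 R'.1)
      (fun f g : Fin h → Bool => f ≤ g))

/-- The interval `[P,Q]` inside `S` is linear: its elements are pairwise comparable. -/
def IsLinearInterval (S : Set (List Bool)) (P Q : List Bool) : Prop :=
  ∀ R R' : List Bool,
    R ∈ S → StanleyLE P R → StanleyLE R Q →
    R' ∈ S → StanleyLE P R' → StanleyLE R' Q →
    StanleyLE R R' ∨ StanleyLE R' R

/-- A bicolored Motzkin path, encoded over `Fin 4` with `0 = U = (1,1)`, `1 = D = (1,-1)`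
and `2, 3` the two colored level steps `(1,0)`: every prefix has at least as many `U`'s
as `D`'s, so the path stays in the quarter plane. -/
def IsBicoloredMotzkin (w : List (Fin 4)) : Prop :=
  ∀ q : List (Fin 4), q <+: w → q.count 1 ≤ q.count 0
namespace Stmt17

/-- count of `true` in the length-`p` prefix -/
def cT (w : List Bool) (p : ℕ) : ℕ := (w.take p).count true

/-- prefix-domination order -/
def Dom (g h : List Bool) : Prop := ∀ k, cT g k ≤ cT h k

lemma cT_zero (w : List Bool) : cT w 0 = 0 := rfl

lemma cT_nil (p : ℕ) : cT [] p = 0 := by simp [cT]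

lemma cT_cons (b : Bool) (w : List Bool) (p : ℕ) :
    cT (b :: w) (p + 1) = (if b then 1 else 0) + cT w p := by
  cases b <;> simp [cT, List.count_cons]; omega

lemma cT_succ (w : List Bool) (p : ℕ) :
    cT w (p + 1) ≤ cT w p + 1 := by
  induction w generalizing p with
  | nil => simp [cT_nil]
  | cons b w ih =>
    cases p with
    | zero => cases b <;> simp [cT, List.count_cons, cT_zero]
    | succ p => rw [cT_cons, cT_cons]; have := ih p; omega

lemma cT_mono (w : List Bool) {p q : ℕ} (h : p ≤ q) : cT w p ≤ cT w q := by
  unfold cT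
  exact List.Sublist.count_le true (List.IsPrefix.sublist (List.take_prefix_take_left h))

lemma cT_of_length_le (w : List Bool) {p : ℕ} (h : w.length ≤ p) :
    cT w p = w.count true := by
  unfold cT; rw [List.take_of_length_le h]

lemma cT_append (u v : List Bool) (p : ℕ) :
    cT (u ++ v) p = cT u p + cT v (p - u.length) := by
  unfold cT
  rw [List.take_append, List.count_append]

lemma cT_length (w : List Bool) : cT w w.length = w.count true := by
  simp [cT]

/-- count false in prefix via length -/
lemma count_false_take (w : List Bool) (p : ℕ) :
    (w.take p).count false = min p w.length - cT w p := by
  have h1 : (w.take p).count false + (w.take p).count true = (w.take p).length := by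
    induction (w.take p) with
    | nil => simp
    | cons b l ih => cases b <;> simp [List.count_cons, ih] <;> omega
  have h2 : (w.take p).length = min p w.length := List.length_take
  unfold cT; omega

lemma pathHeight_eq (w : List Bool) (k : ℕ) :
    pathHeight w k = 2 * (cT w k : ℤ) - (min k w.length : ℕ) := by
  unfold pathHeight
  rw [count_false_take]
  have h1 : cT w k ≤ min k w.length := by
    have : cT w k ≤ (w.take k).length := by
      unfold cT; exact List.count_le_length
    rw [List.length_take] at this; omega
  rw [Nat.cast_sub h1]
  unfold cT
  push_cast
  ring

lemma stanleyLE_iff_dom {P Q : List Bool} (hlen : P.length = Q.length) :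
    StanleyLE P Q ↔ Dom P Q := by
  constructor
  · intro h k
    have := h k
    rw [pathHeight_eq, pathHeight_eq, hlen] at this
    omega
  · intro h k
    rw [pathHeight_eq, pathHeight_eq, hlen]
    have := h k
    omega

lemma dom_refl (g : List Bool) : Dom g g := fun _ => le_refl _

lemma dom_trans {f g h : List Bool} (h1 : Dom f g) (h2 : Dom g h) : Dom f h :=
  fun k => le_trans (h1 k) (h2 k)

/-- cT determines the list (given length) -/
lemma eq_of_cT_eq : ∀ {g h : List Bool}, g.length = h.length →
    (∀ k, cT g k = cT h k) → g = h := by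
  intro g
  induction g with
  | nil => intro h hl _; simpa using (List.length_eq_zero_iff.mp hl.symm)
  | cons b g ih =>
    intro h hl hc
    cases h with
    | nil => simp at hl
    | cons c h2 =>
      have h1 := hc 1
      have hb : b = c := by
        cases b <;> cases c <;> simp [cT_cons, cT_zero] at h1 ⊢
      subst hb
      have : g = h2 := by
        apply ih (by simpa using hl)
        intro k
        have := hc (k+1)
        rw [cT_cons, cT_cons] at this
        omega
      rw [this]

end Stmt17
namespace Stmt17

/-- The bijection from bit strings of length `n-1` to `F_n^∞`. -/
def delta : List Bool → List Bool
  | [] => [true, false]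
  | true :: g => true :: (delta g ++ [false])
  | false :: g => delta g ++ [true, false]

@[simp] lemma delta_nil : delta [] = [true, false] := rfl
lemma delta_true (g : List Bool) : delta (true :: g) = true :: (delta g ++ [false]) := rfl
lemma delta_false (g : List Bool) : delta (false :: g) = delta g ++ [true, false] := rfl

lemma delta_length (g : List Bool) : (delta g).length = 2 * g.length + 2 := by
  induction g with
  | nil => rfl
  | cons b g ih => cases b <;> simp [delta_true, delta_false, ih] <;> omega

lemma delta_count (g : List Bool) : (delta g).count true = g.length + 1 := by
  induction g with
  | nil => rfl
  | cons b g ih => cases b <;> simp [delta_true, delta_false, ih]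

lemma delta_ends (g : List Bool) : ∃ B, delta g = B ++ [false] := by
  induction g with
  | nil => exact ⟨[true], rfl⟩
  | cons b g ih =>
    obtain ⟨B, hB⟩ := ih
    cases b
    · exact ⟨delta g ++ [true], by simp [delta_false]⟩
    · exact ⟨true :: delta g, by simp [delta_true]⟩

lemma cT_single_false (q : ℕ) : cT [false] q = 0 := by
  cases q <;> simp [cT]

lemma cT_pair (q : ℕ) : cT [true, false] q = min q 1 := by
  match q with
  | 0 => rfl
  | 1 => rfl
  | (q+2) =>
    have : List.take (q+2) [true, false] = [true, false] :=
      List.take_of_length_le (by simp)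
    simp [cT, this]

lemma cT_delta_true (g : List Bool) (p : ℕ) :
    cT (delta (true :: g)) (p + 1) = 1 + cT (delta g) p := by
  rw [delta_true, cT_cons, cT_append, cT_single_false]
  simp

lemma cT_delta_false (g : List Bool) (p : ℕ) :
    cT (delta (false :: g)) p = cT (delta g) p + min (p - (2 * g.length + 2)) 1 := by
  rw [delta_false, cT_append, delta_length, cT_pair]

lemma cT_delta_top (g : List Bool) {p : ℕ} (h : 2 * g.length + 2 ≤ p) :
    cT (delta g) p = g.length + 1 := by
  rw [cT_of_length_le _ (by rw [delta_length]; omega), delta_count]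

lemma cT_delta_le (g : List Bool) (p : ℕ) : cT (delta g) p ≤ g.length + 1 := by
  have := List.Sublist.count_le true (List.take_sublist p (delta g))
  rw [delta_count] at this
  exact this

/-- balance: the path never goes below zero -/
lemma delta_balance (g : List Bool) (k : ℕ) :
    min k (2 * g.length + 2) ≤ 2 * cT (delta g) k := by
  induction g generalizing k with
  | nil =>
    simp only [delta_nil]
    rw [cT_pair]
    simp only [List.length_nil]
    omega
  | cons b g ih =>
    cases b
    · rw [cT_delta_false]
      have := ih k
      simp only [List.length_cons]
      omega
    · match k with
      | 0 => simp [cT_zero]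
      | (p+1) =>
        rw [cT_delta_true]
        have := ih p
        simp only [List.length_cons]
        omega

lemma delta_isDyck (g : List Bool) : IsDyckPath (g.length + 1) (delta g) := by
  refine ⟨by rw [delta_length]; ring, by rw [delta_count], ?_⟩
  intro p hp
  obtain ⟨t, ht⟩ := hp
  have hpt : p = (delta g).take p.length := by
    rw [← ht, List.take_append]
    simp
  rw [hpt]
  have hb := delta_balance g p.length
  have hf := count_false_take (delta g) p.length
  have hc : cT (delta g) p.length = ((delta g).take p.length).count true := rfl
  rw [delta_length] at hf
  omega

lemma suffix_last {p w : List Bool} {b c : Bool} (h : (p ++ [b]) <:+ (w ++ [c])) :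
    b = c ∧ p <:+ w := by
  obtain ⟨s, hs⟩ := h
  have h2 : (s ++ p) ++ [b] = w ++ [c] := by rw [← hs]; simp
  have h3 := List.append_inj' h2 rfl
  exact ⟨by simpa using h3.2, ⟨s, h3.1⟩⟩

lemma infix_concat {p w : List Bool} {b : Bool} (h : p <:+: w ++ [b]) :
    p <:+: w ∨ p <:+ (w ++ [b]) := by
  obtain ⟨s, t, hst⟩ := h
  rcases List.eq_nil_or_concat t with rfl | ⟨t', c, rfl⟩
  · right; exact ⟨s, by simpa using hst⟩
  · left
    refine ⟨s, t', ?_⟩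
    have h2 : (s ++ (p ++ t')) ++ [c] = w ++ [b] := by
      rw [← hst]; simp [List.concat_eq_append]
    have h3 := List.append_inj' h2 rfl
    rw [← h3.1]; simp

lemma delta_avoids (g : List Bool) : AvoidsDUU (delta g) := by
  induction g with
  | nil => exact (by decide : ¬ [false, true, true] <:+: [true, false])
  | cons b g ih =>
    cases b
    · rw [delta_false]
      intro hinf
      have he : delta g ++ [true, false] = (delta g ++ [true]) ++ [false] := by simp
      rw [he] at hinf
      rcases infix_concat hinf with h | h
      · rcases infix_concat h with h2 | h2
        · exact ih h2
        · obtain ⟨_, h3⟩ := suffix_last (p := [false, true]) h2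
          obtain ⟨B, hB⟩ := delta_ends g
          rw [hB] at h3
          have := (suffix_last (p := [false]) h3).1
          simp at this
      · have := (suffix_last (p := [false, true]) h).1
        simp at this
    · rw [delta_true]
      intro hinf
      rcases List.infix_cons_iff.mp hinf with h | h
      · obtain ⟨t, ht⟩ := h
        simp at ht
      · rcases infix_concat h with h2 | h2
        · exact ih h2
        · have := (suffix_last (p := [false, true]) h2).1
          simp at this

lemma delta_mem (g : List Bool) : delta g ∈ Fninf (g.length + 1) :=
  ⟨delta_isDyck g, delta_avoids g⟩

lemma delta_inj : ∀ {g h : List Bool}, delta g = delta h → g = h := by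
  intro g
  induction g with
  | nil =>
    intro h he
    cases h with
    | nil => rfl
    | cons c h =>
      have := delta_length (c :: h)
      rw [← he, delta_length] at this
      simp at this
  | cons b g ih =>
    intro h he
    cases h with
    | nil =>
      have := delta_length (b :: g)
      rw [he, delta_length] at this
      simp at this
    | cons c h =>
      obtain ⟨B, hB⟩ := delta_ends g
      obtain ⟨C, hC⟩ := delta_ends h
      cases b <;> cases c
      · -- false false
        rw [delta_false, delta_false] at he
        rw [ih (List.append_cancel_right he)]
      · -- b = false, c = true
        exfalso
        rw [delta_false, delta_true, hC] at he
        have h2 : delta g ++ [true, false] = (true :: C) ++ [false, false] := by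
          simpa [List.append_assoc] using he
        have h3 := List.append_inj' h2 rfl
        simpa using h3.2
      · -- b = true, c = false
        exfalso
        rw [delta_true, delta_false, hB] at he
        have h2 : (true :: B) ++ [false, false] = delta h ++ [true, false] := by
          simpa [List.append_assoc] using he
        have h3 := List.append_inj' h2 rfl
        simpa using h3.2
      · -- true true
        rw [delta_true, delta_true] at he
        have h2 : delta g ++ [false] = delta h ++ [false] := by simpa using he
        rw [ih (List.append_cancel_right h2)]

end Stmt17
namespace Stmt17

lemma cT_le_self (w : List Bool) (p : ℕ) : cT w p ≤ p := by
  unfold cT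
  calc (w.take p).count true ≤ (w.take p).length := List.count_le_length
    _ ≤ p := List.length_take_le _ _

lemma cT_stable (w : List Bool) {p : ℕ} (h : w.length ≤ p) :
    cT w p = cT w w.length := by
  rw [cT_of_length_le w h, cT_length]

/-- anchor points of the path `delta g`. -/
lemma delta_anchor : ∀ (g : List Bool) (i j : ℕ), i + j = g.length →
    cT (delta g) (2 * i + 2 + cT g j) = i + 1 + cT g j ∧
    cT (delta g) (2 * i + 1 + cT g j) = i + 1 + cT g j := by
  intro g
  induction g with
  | nil =>
    intro i j hij
    have hi : i = 0 := by simp at hij; omega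
    have hj : j = 0 := by simp at hij; omega
    subst hi; subst hj
    constructor <;> simp [delta_nil, cT_pair, cT_nil]
  | cons b g ih =>
    intro i j hij
    simp only [List.length_cons] at hij
    cases j with
    | zero =>
      -- i = g.length + 1
      have hi : i = g.length + 1 := by omega
      subst hi
      rw [cT_zero]
      cases b
      · rw [cT_delta_false, cT_delta_false]
        rw [cT_delta_top g (by omega), cT_delta_top g (by omega)]
        constructor <;> simp <;> omega
      · have e1 : 2 * (g.length + 1) + 2 + 0 = (2 * g.length + 3) + 1 := by ring
        have e2 : 2 * (g.length + 1) + 1 + 0 = (2 * g.length + 2) + 1 := by ring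
        rw [e1, e2, cT_delta_true, cT_delta_true]
        rw [cT_delta_top g (by omega), cT_delta_top g (by omega)]
        omega
    | succ j =>
      have hij' : i + j = g.length := by omega
      have hSle : cT g j ≤ j := cT_le_self g j
      obtain ⟨IH1, IH2⟩ := ih i j hij'
      cases b
      · -- cT (false :: g) (j+1) = cT g j
        have hS : cT (false :: g) (j + 1) = cT g j := by
          rw [cT_cons]; simp
        rw [hS, cT_delta_false, cT_delta_false]
        have hb1 : 2 * i + 2 + cT g j - (2 * g.length + 2) = 0 := by omega
        have hb2 : 2 * i + 1 + cT g j - (2 * g.length + 2) = 0 := by omega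
        rw [hb1, hb2]
        simp [IH1, IH2]
      · -- cT (true :: g) (j+1) = 1 + cT g j
        have hS : cT (true :: g) (j + 1) = 1 + cT g j := by
          rw [cT_cons]; simp
        rw [hS]
        have e1 : 2 * i + 2 + (1 + cT g j) = (2 * i + 2 + cT g j) + 1 := by ring
        have e2 : 2 * i + 1 + (1 + cT g j) = (2 * i + 1 + cT g j) + 1 := by ring
        rw [e1, e2, cT_delta_true, cT_delta_true, IH1, IH2]
        omega

/-- backward direction: domination of the paths implies domination of the codes -/
lemma dom_of_delta_dom {g h : List Bool} (hlen : g.length = h.length)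
    (hd : Dom (delta g) (delta h)) : Dom g h := by
  set m := g.length with hm
  -- first prove for k ≤ m by strong induction
  have main : ∀ k, k ≤ m → cT g k ≤ cT h k := by
    intro k
    induction k using Nat.strong_induction_on with
    | _ k IH =>
      intro hkm
      cases k with
      | zero => simp [cT_zero]
      | succ k =>
        by_contra hcon
        push_neg at hcon
        have h1 : cT g k ≤ cT h k := IH k (by omega) (by omega)
        have h2 : cT g (k+1) ≤ cT g k + 1 := cT_succ g k
        have h3 : cT h k ≤ cT h (k+1) := cT_mono h (by omega)
        -- so cT h (k+1) = cT h k = cT g k =: s and cT g (k+1) = s + 1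
        have hs1 : cT h (k+1) = cT g k := by omega
        have hs2 : cT g (k+1) = cT g k + 1 := by omega
        set s := cT g k with hsdef
        set i := m - (k+1) with hidef
        have hij : i + (k+1) = m := by omega
        have Ah := (delta_anchor h i (k+1) (by omega)).1
        have Ag := (delta_anchor g i (k+1) (by omega)).2
        rw [hs1] at Ah
        rw [hs2] at Ag
        have e : 2 * i + 1 + (cT g k + 1) = 2 * i + 2 + cT g k := by ring
        rw [e] at Ag
        have := hd (2 * i + 2 + cT g k)
        rw [Ag, Ah] at this
        omega
  intro k
  rcases Nat.le_total k m with hk | hk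
  · exact main k hk
  · have h1 : cT g k = cT g m := by rw [cT_stable g (by omega), hm]
    have h2 : cT h m ≤ cT h k := cT_mono h hk
    have := main m (le_refl m)
    omega

end Stmt17
namespace Stmt17

lemma cT_count_zero {v : List Bool} (hv : v.count true = 0) (j : ℕ) : cT v j = 0 := by
  have := List.Sublist.count_le true (List.take_sublist j v)
  unfold cT; omega

lemma cT_one (x : Bool) (y : List Bool) : cT (x :: y) 1 = if x then 1 else 0 := by
  rw [show (1:ℕ) = 0 + 1 from rfl, cT_cons, cT_zero]
  cases x <;> simp

lemma cT_append_left (u v : List Bool) {k : ℕ} (hk : k ≤ u.length) :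
    cT (u ++ v) k = cT u k := by
  rw [cT_append]
  have : k - u.length = 0 := by omega
  rw [this, cT_zero, Nat.add_zero]

/-- the two wrapping operations preserve domination -/
lemma dom_delta_wrap {g h : List Bool} (hlen : g.length = h.length) (b : Bool)
    (hd : Dom (delta g) (delta h)) : Dom (delta (b :: g)) (delta (b :: h)) := by
  cases b
  · intro k
    rw [cT_delta_false, cT_delta_false, hlen]
    have := hd k
    omega
  · intro k
    cases k with
    | zero => simp [cT_zero]
    | succ p =>
      rw [cT_delta_true, cT_delta_true]
      have := hd p
      omega

lemma dom_delta_flip_base (v : List Bool) :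
    Dom (delta (false :: v)) (delta (true :: v)) := by
  intro k
  cases k with
  | zero => simp [cT_zero]
  | succ p =>
    rw [cT_delta_false, cT_delta_true]
    have h1 := cT_succ (delta v) p
    rcases Nat.le_total (p + 1) (2 * v.length + 2) with h | h
    · have : p + 1 - (2 * v.length + 2) = 0 := by omega
      rw [this]; omega
    · rw [cT_delta_top v h]
      have hb := delta_balance v p
      have hle := cT_delta_le v p
      omega

lemma dom_delta_swap_base (v : List Bool) :
    Dom (delta (false :: true :: v)) (delta (true :: false :: v)) := by
  intro k
  cases k with
  | zero => simp [cT_zero]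
  | succ p =>
    rw [cT_delta_true, cT_delta_false, cT_delta_false]
    simp only [List.length_cons]
    have h1 : cT (delta (true :: v)) (p + 1) = 1 + cT (delta v) p := cT_delta_true v p
    rw [h1]
    omega

lemma dom_delta_flip_at (u v : List Bool) :
    Dom (delta (u ++ false :: v)) (delta (u ++ true :: v)) := by
  induction u with
  | nil => exact dom_delta_flip_base v
  | cons a u ih =>
    have : ∀ (b : Bool), (u ++ b :: v).length = (u ++ (!b) :: v).length := by simp
    simpa using dom_delta_wrap (by simpa using this false) a ih

lemma dom_delta_swap_at (u v : List Bool) :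
    Dom (delta (u ++ false :: true :: v)) (delta (u ++ true :: false :: v)) := by
  induction u with
  | nil => exact dom_delta_swap_base v
  | cons a u ih =>
    simpa using dom_delta_wrap (by simp) a ih

lemma cT_flip (u v : List Bool) (k : ℕ) :
    cT (u ++ true :: v) k = cT (u ++ false :: v) k + (if u.length + 1 ≤ k then 1 else 0) := by
  rw [cT_append, cT_append]
  rcases Nat.le_total k u.length with h | h
  · have : k - u.length = 0 := by omega
    rw [this, cT_zero, cT_zero]
    simp; omega
  · rcases Nat.eq_or_lt_of_le h with h' | h'
    · subst h'
      have : u.length - u.length = 0 := by omega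
      rw [this, cT_zero, cT_zero]
      simp
    · have : k - u.length = (k - u.length - 1) + 1 := by omega
      rw [this, cT_cons, cT_cons]
      have : u.length + 1 ≤ k := h'
      simp [this]
      omega

lemma cT_swap (u v : List Bool) (k : ℕ) :
    cT (u ++ true :: false :: v) k
      = cT (u ++ false :: true :: v) k + (if k = u.length + 1 then 1 else 0) := by
  rw [cT_append, cT_append]
  rcases Nat.lt_or_ge k (u.length + 1) with h | h
  · have : k - u.length = 0 := by omega
    rw [this, cT_zero, cT_zero]
    simp; omega
  · rcases Nat.eq_or_lt_of_le h with h' | h'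
    · subst h'
      have e1 : u.length + 1 - u.length = 1 := by omega
      rw [e1, cT_one, cT_one]
      simp
    · have e : k - u.length = (k - u.length - 2) + 1 + 1 := by omega
      rw [e, cT_cons, cT_cons, cT_cons, cT_cons]
      have : ¬ (k = u.length + 1) := by omega
      simp [this]

lemma exists_first_diff : ∀ {g h : List Bool}, g.length = h.length → g ≠ h →
    ∃ u b v c v', g = u ++ b :: v ∧ h = u ++ c :: v' ∧ b ≠ c := by
  intro g
  induction g with
  | nil =>
    intro h hl hne
    cases h with
    | nil => exact absurd rfl hne
    | cons c h => simp at hl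
  | cons b g ih =>
    intro h hl hne
    cases h with
    | nil => simp at hl
    | cons c h2 =>
      by_cases hbc : b = c
      · subst hbc
        have hgh : g ≠ h2 := by intro he; exact hne (by rw [he])
        obtain ⟨u, b', v, c', v', h1, h2', h3⟩ := ih (by simpa using hl) hgh
        exact ⟨b :: u, b', v, c', v', by simp [h1], by simp [h2'], h3⟩
      · exact ⟨[], b, g, c, h2, rfl, rfl, hbc⟩

lemma exists_first_true : ∀ {v : List Bool}, v.count true ≠ 0 →
    ∃ v1 v2, v = v1 ++ true :: v2 ∧ v1.count true = 0 := by
  intro v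
  induction v with
  | nil => intro h; simp at h
  | cons b v ih =>
    intro h
    cases b
    · have : v.count true ≠ 0 := by simpa [List.count_cons] using h
      obtain ⟨v1, v2, h1, h2⟩ := ih this
      exact ⟨false :: v1, v2, by simp [h1], by simpa [List.count_cons] using h2⟩
    · exact ⟨[], v, rfl, rfl⟩

lemma mu_lt {g g' h : List Bool} (hdom' : Dom g' h) (hle : ∀ k, cT g k ≤ cT g' k)
    (q : ℕ) (hq : q < g.length + 1) (hstrict : cT g q < cT g' q) :
    ∑ k ∈ Finset.range (g.length + 1), (cT h k - cT g' k)
      < ∑ k ∈ Finset.range (g.length + 1), (cT h k - cT g k) := by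
  apply Finset.sum_lt_sum
  · intro i _
    have := hle i
    omega
  · refine ⟨q, Finset.mem_range.mpr hq, ?_⟩
    have h1 := hdom' q
    omega

/-- forward direction: domination of codes implies domination of paths -/
lemma dom_delta_of_dom : ∀ (N : ℕ) {g h : List Bool}, g.length = h.length → Dom g h →
    (∑ k ∈ Finset.range (g.length + 1), (cT h k - cT g k)) ≤ N →
    Dom (delta g) (delta h) := by
  intro N
  induction N with
  | zero =>
    intro g h hlen hdom hmu
    have hgh : g = h := by
      apply eq_of_cT_eq hlen
      intro k
      have hz : ∀ i ∈ Finset.range (g.length + 1), cT h i - cT g i = 0 := by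
        intro i _
        have hsum : ∑ k ∈ Finset.range (g.length + 1), (cT h k - cT g k) = 0 :=
          Nat.le_zero.mp hmu
        exact Finset.sum_eq_zero_iff.mp hsum i ‹i ∈ _›
      rcases Nat.le_total k g.length with hk | hk
      · have := hz k (Finset.mem_range.mpr (by omega))
        have := hdom k
        omega
      · have h1 : cT g k = cT g g.length := cT_stable g hk
        have h2 : cT h k = cT h g.length := by
          rw [hlen] at hk ⊢; exact cT_stable h hk
        have := hz g.length (Finset.mem_range.mpr (by omega))
        have := hdom g.length
        omega
    subst hgh
    exact dom_refl _
  | succ N IH =>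
    intro g h hlen hdom hmu
    by_cases hgh : g = h
    · subst hgh; exact dom_refl _
    obtain ⟨u, b, v, c, v', hgu, hhu, hbc⟩ := exists_first_diff hlen hgh
    -- the first differing bit must be false in g and true in h
    have hcnt : cT g (u.length + 1) = u.count true + (if b then 1 else 0) := by
      rw [hgu, cT_append]
      have e : u.length + 1 - u.length = 1 := by omega
      rw [e, cT_one, cT_of_length_le u (by omega)]
    have hcnt' : cT h (u.length + 1) = u.count true + (if c then 1 else 0) := by
      rw [hhu, cT_append]
      have e : u.length + 1 - u.length = 1 := by omega
      rw [e, cT_one, cT_of_length_le u (by omega)]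
    have hbf : b = false ∧ c = true := by
      have := hdom (u.length + 1)
      cases b <;> cases c <;> simp_all
    obtain ⟨hb, hc⟩ := hbf
    subst hb; subst hc
    rw [if_pos rfl] at hcnt'
    rw [if_neg (by simp)] at hcnt
    by_cases hv : v.count true = 0
    · -- flip move: g' = u ++ true :: v
      set g' := u ++ true :: v with hg'
      have hlg' : g'.length = g.length := by rw [hg', hgu]; simp
      have hle : ∀ k, cT g k ≤ cT g' k := by
        intro k
        rw [hgu, hg', cT_flip]
        omega
      have hgk : ∀ k, u.length + 1 ≤ k → cT g k = u.count true := by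
        intro k hk
        rw [hgu, cT_append]
        have e : k - u.length = (k - u.length - 1) + 1 := by omega
        rw [e, cT_cons, cT_of_length_le u (by omega), cT_count_zero hv]
        simp
      have hdom' : Dom g' h := by
        intro k
        rcases Nat.lt_or_ge k (u.length + 1) with hk | hk
        · rw [hg', cT_append_left u _ (by omega), ← cT_append_left u (false :: v) (by omega), ← hgu]
          exact hdom k
        · have h1 : cT g' k = cT g k + 1 := by
            rw [hgu, hg', cT_flip, if_pos hk]
          have h2 : cT h k ≥ u.count true + 1 := by
            calc u.count true + 1 = cT h (u.length + 1) := by omega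
              _ ≤ cT h k := cT_mono h hk
          rw [h1, hgk k hk]
          omega
      have hmu' : ∑ k ∈ Finset.range (g'.length + 1), (cT h k - cT g' k) ≤ N := by
        rw [hlg']
        have := mu_lt hdom' hle (u.length + 1)
          (by rw [hgu]; simp only [List.length_append, List.length_cons]; omega)
          (by rw [hgu, hg', cT_flip]; simp)
        omega
      have hd1 : Dom (delta g) (delta g') := by
        rw [hgu, hg']; exact dom_delta_flip_at u v
      exact dom_trans hd1 (IH (by rw [hlg', hlen]) hdom' hmu')
    · -- swap move
      obtain ⟨v1, v2, hv12, hv1⟩ := exists_first_true hv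
      -- unified: g = U ++ false :: true :: v2 with U.count true = u.count true, |U| ≥ |u|
      have key : ∃ U, g = U ++ false :: true :: v2 ∧ U.count true = u.count true
          ∧ u.length ≤ U.length := by
        rcases List.eq_nil_or_concat v1 with rfl | ⟨v1', lb, rfl⟩
        · exact ⟨u, by rw [hgu, hv12]; simp, rfl, le_refl _⟩
        · have hlb : lb = false := by
            rcases lb with _ | _
            · rfl
            · exfalso; simp [List.count_append] at hv1
          subst hlb
          refine ⟨u ++ false :: v1', ?_, ?_, by simp⟩
          · rw [hgu, hv12]
            simp [List.concat_eq_append]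
          · simp [List.count_append, List.count_cons]
            have : v1'.count true = 0 := by
              simp [List.concat_eq_append, List.count_append] at hv1
              omega
            omega
      obtain ⟨U, hgU, hUcnt, hUlen⟩ := key
      set g' := U ++ true :: false :: v2 with hg'
      have hlg' : g'.length = g.length := by rw [hg', hgU]; simp
      have hle : ∀ k, cT g k ≤ cT g' k := by
        intro k
        rw [hgU, hg', cT_swap]
        omega
      have hgU1 : cT g (U.length + 1) = u.count true := by
        rw [hgU, cT_append]
        have e : U.length + 1 - U.length = 1 := by omega
        rw [e, cT_one, cT_of_length_le U (by omega)]
        simp [hUcnt]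
      have hdom' : Dom g' h := by
        intro k
        rcases Nat.decEq k (U.length + 1) with hk | hk
        · -- k ≠ U.length + 1
          have : cT g' k = cT g k := by
            rw [hgU, hg', cT_swap, if_neg hk, Nat.add_zero]
          rw [this]
          exact hdom k
        · -- k = U.length + 1
          subst hk
          have h0 : cT g' (U.length + 1) = cT g (U.length + 1) + 1 := by
            rw [hgU, hg', cT_swap, if_pos rfl]
          have h1 : cT g' (U.length + 1) = u.count true + 1 := by rw [h0, hgU1]
          have h2 : cT h (U.length + 1) ≥ u.count true + 1 := by
            calc u.count true + 1 = cT h (u.length + 1) := by omega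
              _ ≤ cT h (U.length + 1) := cT_mono h (by omega)
          omega
      have hmu' : ∑ k ∈ Finset.range (g'.length + 1), (cT h k - cT g' k) ≤ N := by
        rw [hlg']
        have := mu_lt hdom' hle (U.length + 1)
          (by rw [hgU]; simp only [List.length_append, List.length_cons]; omega)
          (by rw [hgU, hg', cT_swap]; simp)
        omega
      have hd1 : Dom (delta g) (delta g') := by
        rw [hgU, hg']; exact dom_delta_swap_at U v2
      exact dom_trans hd1 (IH (by rw [hlg', hlen]) hdom' hmu')

/-- the order correspondence -/
theorem dom_delta_iff {g h : List Bool} (hlen : g.length = h.length) :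
    Dom (delta g) (delta h) ↔ Dom g h := by
  constructor
  · exact dom_of_delta_dom hlen
  · intro hd
    exact dom_delta_of_dom _ hlen hd (le_refl _)

end Stmt17
namespace Stmt17

def cF (w : List Bool) (p : ℕ) : ℕ := (w.take p).count false

lemma count_split (w : List Bool) : w.count false + w.count true = w.length := by
  induction w with
  | nil => simp
  | cons b w ih => cases b <;> simp [List.count_cons, ih] <;> omega

lemma cT_take_succ (w : List Bool) (i : ℕ) (h : i < w.length) :
    cT w (i + 1) = cT w i + (if w[i] then 1 else 0) := by
  unfold cT
  rw [List.take_succ, List.getElem?_eq_getElem h]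
  cases hw : w[i] <;> simp [hw, List.count_append]

lemma cF_take_succ (w : List Bool) (i : ℕ) (h : i < w.length) :
    cF w (i + 1) = cF w i + (if w[i] then 0 else 1) := by
  unfold cF
  rw [List.take_succ, List.getElem?_eq_getElem h]
  cases hw : w[i] <;> simp [hw, List.count_append]

lemma dyck_prefix_cond {n : ℕ} {w : List Bool} (hw : IsDyckPath n w) (j : ℕ) :
    cF w j ≤ cT w j :=
  hw.2.2 _ (List.take_prefix j w)

lemma cT_full {n : ℕ} {w : List Bool} (hw : IsDyckPath n w) {j : ℕ} (hj : 2 * n ≤ j) :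
    cT w j = n := by
  rw [cT_of_length_le w (by rw [hw.1]; omega), hw.2.1]

lemma cF_full {n : ℕ} {w : List Bool} (hw : IsDyckPath n w) {j : ℕ} (hj : 2 * n ≤ j) :
    cF w j = n := by
  unfold cF
  rw [List.take_of_length_le (by rw [hw.1]; omega)]
  have := count_split w
  rw [hw.2.1, hw.1] at this
  omega

/-- interior positivity for DUU-avoiding Dyck paths ending in a double descent -/
lemma interior_pos {n : ℕ} {w : List Bool} (hw : IsDyckPath (n + 1) w)
    (havoid : AvoidsDUU w) (hz : ∃ z, w = z ++ [false, false]) :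
    ∀ j, 1 ≤ j → j ≤ 2 * n + 1 → cF w j < cT w j := by
  have hlen : w.length = 2 * n + 2 := by rw [hw.1]; ring
  have hpre : ∀ j, cF w j ≤ cT w j := dyck_prefix_cond hw
  -- key descent argument
  have aux : ∀ d j, 1 ≤ j → j ≤ 2 * n + 1 → 2 * n + 2 = j + d →
      cF w j = cT w j → False := by
    intro d
    induction d using Nat.strong_induction_on with
    | _ d IH =>
      intro j hj1 hj2 hjd heq
      have hjlt : j < w.length := by omega
      -- the letter w[j] must be true
      have hwj : w[j] = true := by
        by_contra hc
        have hc' : w[j] = false := by simpa using hc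
        have h1 := cT_take_succ w j hjlt
        have h2 := cF_take_succ w j hjlt
        rw [hc'] at h1 h2
        have := hpre (j + 1)
        simp at h1 h2
        omega
      -- j + 1 cannot be the end
      have hne : j + 1 ≠ 2 * n + 2 := by
        intro hend
        have h1 := cT_take_succ w j hjlt
        have h2 := cF_take_succ w j hjlt
        rw [hwj] at h1 h2
        have h3 : cT w (j+1) = n + 1 := cT_full hw (by omega)
        have h4 : cF w (j+1) = n + 1 := cF_full hw (by omega)
        simp at h1 h2
        omega
      -- the letter w[j-1] must be false
      have hjm : j - 1 < w.length := by omega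
      have hwjm : w[j - 1] = false := by
        by_contra hc
        have hc' : w[j - 1] = true := by simpa using hc
        have h1 := cT_take_succ w (j-1) hjm
        have h2 := cF_take_succ w (j-1) hjm
        rw [hc'] at h1 h2
        have e : j - 1 + 1 = j := by omega
        rw [e] at h1 h2
        have := hpre (j - 1)
        simp at h1 h2
        omega
      have hj1lt : j + 1 < w.length := by omega
      cases hwj1 : w[j + 1] with
      | true =>
        -- DUU infix: contradiction
        apply havoid
        refine ⟨w.take (j - 1), w.drop (j + 2), ?_⟩
        have e1 : w.drop (j - 1) = w[j-1] :: w.drop (j - 1 + 1) := List.drop_eq_getElem_cons hjm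
        have e2 : w.drop j = w[j] :: w.drop (j + 1) := List.drop_eq_getElem_cons hjlt
        have e3 : w.drop (j + 1) = w[j+1] :: w.drop (j + 2) := List.drop_eq_getElem_cons hj1lt
        have e : j - 1 + 1 = j := by omega
        rw [e] at e1
        rw [hwjm] at e1
        rw [hwj] at e2
        rw [hwj1] at e3
        calc w.take (j-1) ++ [false, true, true] ++ w.drop (j + 2)
            = w.take (j-1) ++ (false :: true :: true :: w.drop (j+2)) := by simp
          _ = w.take (j-1) ++ w.drop (j-1) := by rw [e1, e2, e3]
          _ = w := List.take_append_drop _ _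
      | false =>
        -- heights return to zero two steps later
        have h1 := cT_take_succ w j hjlt
        have h2 := cF_take_succ w j hjlt
        have h3 := cT_take_succ w (j+1) hj1lt
        have h4 := cF_take_succ w (j+1) hj1lt
        rw [hwj] at h1 h2
        rw [hwj1] at h3 h4
        simp at h1 h2 h3 h4
        have e12 : j + 1 + 1 = j + 2 := by omega
        rw [e12] at h3 h4
        have heq2 : cF w (j + 2) = cT w (j + 2) := by omega
        rcases Nat.lt_or_ge (j + 2) (2 * n + 2) with hlt | hge
        · exact IH (d - 2) (by omega) (j + 2) (by omega) (by omega) (by omega) heq2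
        · -- j + 2 = 2n + 2, so j = 2n, and counts give a contradiction
          obtain ⟨z, hzz⟩ := hz
          have hzl : z.length = 2 * n := by
            have := congrArg List.length hzz
            simp at this
            omega
          have hzT : z.count true = n + 1 := by
            have := congrArg (List.count true) hzz
            simp [List.count_append] at this
            rw [hw.2.1] at this
            omega
          have hC : cT w (2 * n) = n + 1 := by
            unfold cT
            rw [hzz, List.take_append]
            have e1 : List.take (2 * n) z = z := List.take_of_length_le (by omega)
            have e2 : 2 * n - z.length = 0 := by omega
            rw [e1, e2]
            simp [hzT]
          have hD := count_false_take w (2 * n)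
          have hj2n : j = 2 * n := by omega
          rw [hj2n] at heq
          have e3 : cF w (2 * n) = (w.take (2 * n)).count false := rfl
          omega
  intro j hj1 hj2
  rcases Nat.lt_or_ge (cF w j) (cT w j) with h | h
  · exact h
  · exact absurd (le_antisymm (hpre j) h)
      (fun heq => aux (2 * n + 2 - j) j hj1 hj2 (by omega) heq)

/-- surjectivity of `delta` -/
lemma delta_surj : ∀ n (w : List Bool), w ∈ Fninf (n + 1) →
    ∃ g, g.length = n ∧ delta g = w := by
  intro n
  induction n using Nat.strong_induction_on with
  | _ n IH =>
    intro w hw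
    obtain ⟨hdyck, havoid⟩ := hw
    have hlen : w.length = 2 * n + 2 := by rw [hdyck.1]; ring
    have hcntT : w.count true = n + 1 := hdyck.2.1
    have hcntF : w.count false = n + 1 := by
      have := count_split w
      omega
    -- last letter is false
    rcases List.eq_nil_or_concat w with rfl | ⟨y, c, hyc⟩
    · simp at hlen
    rw [List.concat_eq_append] at hyc
    have hylen : y.length = 2 * n + 1 := by
      have := congrArg List.length hyc
      simp at this
      omega
    have hc : c = false := by
      by_contra hcc
      have hcc' : c = true := by simpa using hcc
      subst hcc'
      have hyT : y.count true = n := by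
        have := congrArg (List.count true) hyc
        simp [List.count_append] at this
        omega
      have hyF : y.count false = n + 1 := by
        have := congrArg (List.count false) hyc
        simp [List.count_append] at this
        omega
      have := hdyck.2.2 y ⟨[true], hyc.symm⟩
      omega
    subst hc
    -- second-to-last letter
    rcases List.eq_nil_or_concat y with rfl | ⟨z, d, hzd⟩
    · simp at hylen
    rw [List.concat_eq_append] at hzd
    have hzlen : z.length = 2 * n := by
      have := congrArg List.length hzd
      simp at this
      omega
    subst hzd
    cases n with
    | zero =>
      -- w = [true, false]
      have hzn : z = [] := List.length_eq_zero_iff.mp hzlen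
      subst hzn
      have hd : d = true := by
        have := congrArg (List.count true) hyc
        simp [List.count_append, List.count_cons] at this
        cases d
        · simp at this; omega
        · rfl
      subst hd
      exact ⟨[], rfl, by rw [hyc]; rfl⟩
    | succ m =>
      cases d with
      | true =>
        -- w = z ++ [true, false], and z ∈ F_{n}
        have hzT : z.count true = m + 1 := by
          have := congrArg (List.count true) hyc
          simp [List.count_append, List.count_cons] at this
          omega
        have hzmem : z ∈ Fninf (m + 1) := by
          refine ⟨⟨by omega, hzT, ?_⟩, ?_⟩
          · intro p hp
            exact hdyck.2.2 p (hp.trans ⟨[true, false], by rw [hyc]; simp⟩)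
          · intro hinf
            exact havoid (hinf.trans ⟨[], [true, false], by rw [hyc]; simp⟩)
        obtain ⟨g, hg1, hg2⟩ := IH m (by omega) z hzmem
        refine ⟨false :: g, by simp [hg1], ?_⟩
        rw [delta_false, hg2, hyc]
        simp
      | false =>
        -- w ends in double descent
        have hz2 : w = z ++ [false, false] := by rw [hyc]; simp
        have hipos := interior_pos (n := m + 1) hdyck havoid ⟨z, hz2⟩
        -- first letter is true
        have hz0 : z ≠ [] := by intro hzz; rw [hzz] at hzlen; simp at hzlen
        obtain ⟨z0, z', rfl⟩ := List.exists_cons_of_ne_nil hz0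
        have hz0T : z0 = true := by
          have h1 := hipos 1 (le_refl 1) (by omega)
          cases z0
          · exfalso
            have h2 : cF w 1 = 1 ∧ cT w 1 = 0 := by
              constructor <;> simp [cF, cT, hyc]
            omega
          · rfl
        subst hz0T
        -- B = z' ++ [false] is in F_{m+1}
        set B := z' ++ [false] with hB
        have hBlen : B.length = 2 * (m + 1) := by
          simp [hB]
          simp at hzlen
          omega
        have hweq : w = true :: B ++ [false] := by
          rw [hyc, hB]; simp
        have hBT : B.count true = m + 1 := by
          have h6 : w.count true = 1 + z'.count true := by
            rw [hyc]; simp [List.count_append, List.count_cons]; omega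
          have h7 : B.count true = z'.count true := by
            rw [hB]; simp [List.count_append]
          omega
        have hBmem : B ∈ Fninf (m + 1) := by
          refine ⟨⟨hBlen, hBT, ?_⟩, ?_⟩
          · intro p hp
            have hplen : p.length ≤ 2 * (m + 1) := by
              have := hp.length_le
              omega
            rw [List.prefix_iff_eq_take] at hp
            have hcT : cT w (p.length + 1) = 1 + cT B p.length := by
              rw [hweq]
              have : (true :: B ++ [false]).take (p.length + 1)
                  = true :: (B ++ [false]).take p.length := by simp
              unfold cT
              rw [this, List.take_append]
              have : p.length - B.length = 0 := by omega
              rw [this]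
              simp [List.count_append, List.count_cons]
              omega
            have hcF : cF w (p.length + 1) = cF B p.length := by
              rw [hweq]
              have h5 : (true :: B ++ [false]).take (p.length + 1)
                  = true :: (B ++ [false]).take p.length := by simp
              unfold cF
              rw [h5, List.take_append]
              have : p.length - B.length = 0 := by omega
              rw [this]
              simp [List.count_append, List.count_cons]
            have hip := hipos (p.length + 1) (by omega) (by omega)
            rw [hp]
            have e1 : (B.take p.length).count false = cF B p.length := rfl
            have e2 : (B.take p.length).count true = cT B p.length := rfl
            rw [e1, e2]
            omega
          · intro hinf
            exact havoid (hinf.trans ⟨[true], [false], by rw [hweq]; simp⟩)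
        obtain ⟨g, hg1, hg2⟩ := IH m (by omega) B hBmem
        refine ⟨true :: g, by simp [hg1], ?_⟩
        rw [delta_true, hg2]
        exact hweq.symm

end Stmt17
namespace Stmt17

def enc : Bool → Bool → Fin 4
  | true, false => 0
  | false, true => 1
  | true, true => 2
  | false, false => 3

def dec1 : Fin 4 → Bool
  | 0 => true
  | 1 => false
  | 2 => true
  | 3 => false

def dec2 : Fin 4 → Bool
  | 0 => false
  | 1 => true
  | 2 => true
  | 3 => false

lemma enc_dec (c : Fin 4) : enc (dec1 c) (dec2 c) = c := by
  fin_cases c <;> rfl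

lemma dec1_enc (hb gb : Bool) : dec1 (enc hb gb) = hb := by
  cases hb <;> cases gb <;> rfl

lemma dec2_enc (hb gb : Bool) : dec2 (enc hb gb) = gb := by
  cases hb <;> cases gb <;> rfl

lemma zip_map (w : List (Fin 4)) :
    List.zipWith enc (w.map dec1) (w.map dec2) = w := by
  induction w with
  | nil => rfl
  | cons c w ih => simp [enc_dec, ih]

lemma map_zip1 : ∀ {h g : List Bool}, h.length = g.length →
    (List.zipWith enc h g).map dec1 = h := by
  intro h
  induction h with
  | nil => intro g _; rfl
  | cons b h ih =>
    intro g hg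
    cases g with
    | nil => simp at hg
    | cons c g => simp [dec1_enc, ih (by simpa using hg)]

lemma map_zip2 : ∀ {h g : List Bool}, h.length = g.length →
    (List.zipWith enc h g).map dec2 = g := by
  intro h
  induction h with
  | nil =>
    intro g hg
    rw [List.length_nil] at hg
    rw [(List.length_eq_zero_iff.mp hg.symm)]
    rfl
  | cons b h ih =>
    intro g hg
    cases g with
    | nil => simp at hg
    | cons c g => simp [dec2_enc, ih (by simpa using hg)]

lemma count_enc : ∀ {g h : List Bool}, g.length = h.length →
    g.count true + (List.zipWith enc h g).count 0
      = h.count true + (List.zipWith enc h g).count 1 := by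
  intro g
  induction g with
  | nil =>
    intro h hl
    rw [(List.length_eq_zero_iff.mp hl.symm)]
    rfl
  | cons b g ih =>
    intro h hl
    cases h with
    | nil => simp at hl
    | cons c h2 =>
      have := ih (h := h2) (by simpa using hl)
      cases b <;> cases c <;>
        simp [List.count_cons, enc] <;> omega

lemma dom_iff_motz {g h : List Bool} (hlen : g.length = h.length) :
    Dom g h ↔ IsBicoloredMotzkin (List.zipWith enc h g) := by
  constructor
  · intro hd q hq
    rw [List.prefix_iff_eq_take] at hq
    rw [hq, List.take_zipWith]
    have hc := count_enc (g := g.take q.length) (h := h.take q.length)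
      (by simp [hlen])
    have hdk := hd q.length
    have e1 : cT g q.length = (g.take q.length).count true := rfl
    have e2 : cT h q.length = (h.take q.length).count true := rfl
    omega
  · intro hm k
    have hq := hm ((List.zipWith enc h g).take k) (List.take_prefix _ _)
    rw [List.take_zipWith] at hq
    have hc := count_enc (g := g.take k) (h := h.take k) (by simp [hlen])
    have e1 : cT g k = (g.take k).count true := rfl
    have e2 : cT h k = (h.take k).count true := rfl
    omega

/-- the set of code pairs -/
def GH (m : ℕ) :=
  {gh : List Bool × List Bool // gh.1.length = m ∧ gh.2.length = m ∧ Dom gh.1 gh.2}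

def PQ (n : ℕ) :=
  {pq : List Bool × List Bool // pq.1 ∈ Fninf n ∧ pq.2 ∈ Fninf n ∧ StanleyLE pq.1 pq.2}

def MZ (m : ℕ) := {w : List (Fin 4) // w.length = m ∧ IsBicoloredMotzkin w}

def ghToPQ (m : ℕ) (x : GH m) : PQ (m + 1) :=
  ⟨(delta x.1.1, delta x.1.2),
    by have := delta_mem x.1.1; rwa [x.2.1] at this,
    by have := delta_mem x.1.2; rwa [x.2.2.1] at this,
    by
      have hlen : (delta x.1.1).length = (delta x.1.2).length := by
        rw [delta_length, delta_length, x.2.1, x.2.2.1]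
      exact (stanleyLE_iff_dom hlen).mpr
        ((dom_delta_iff (x.2.1.trans x.2.2.1.symm)).mpr x.2.2.2)⟩

lemma ghToPQ_bij (m : ℕ) : Function.Bijective (ghToPQ m) := by
  constructor
  · intro x y hxy
    have h1 : delta x.1.1 = delta y.1.1 := congrArg (fun z => z.1.1) hxy
    have h2 : delta x.1.2 = delta y.1.2 := congrArg (fun z => z.1.2) hxy
    exact Subtype.ext (Prod.ext (delta_inj h1) (delta_inj h2))
  · rintro ⟨⟨P, Q⟩, hP, hQ, hS⟩
    obtain ⟨g, hg1, hg2⟩ := delta_surj m P hP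
    obtain ⟨h, hh1, hh2⟩ := delta_surj m Q hQ
    have hlenPQ : P.length = Q.length := by
      rw [hP.1.1, hQ.1.1]
    have hdom : Dom g h := by
      apply (dom_delta_iff (hg1.trans hh1.symm)).mp
      rw [hg2, hh2]
      exact (stanleyLE_iff_dom hlenPQ).mp hS
    exact ⟨⟨(g, h), hg1, hh1, hdom⟩, by
      apply Subtype.ext
      simp only [ghToPQ]
      rw [hg2, hh2]⟩

def ghToMZ (m : ℕ) (x : GH m) : MZ m :=
  ⟨List.zipWith enc x.1.2 x.1.1,
    by rw [List.length_zipWith, x.2.1, x.2.2.1]; simp,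
    (dom_iff_motz (x.2.1.trans x.2.2.1.symm)).mp x.2.2.2⟩

def mzToGH (m : ℕ) (y : MZ m) : GH m :=
  ⟨(y.1.map dec2, y.1.map dec1),
    by simp [y.2.1],
    by simp [y.2.1],
    by
      have h := (dom_iff_motz (g := y.1.map dec2) (h := y.1.map dec1) (by simp)).mpr
      rw [zip_map] at h
      exact h y.2.2⟩

def ghEquivMZ (m : ℕ) : GH m ≃ MZ m where
  toFun := ghToMZ m
  invFun := mzToGH m
  left_inv := by
    rintro ⟨⟨g, h⟩, h1, h2, h3⟩
    apply Subtype.ext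
    simp only [ghToMZ, mzToGH]
    exact Prod.ext (map_zip2 (h2.trans h1.symm)) (map_zip1 (h2.trans h1.symm))
  right_inv := by
    rintro ⟨w, hw1, hw2⟩
    apply Subtype.ext
    simp only [ghToMZ, mzToGH]
    exact zip_map w

noncomputable def pqEquivMZ (m : ℕ) : PQ (m + 1) ≃ MZ m :=
  (Equiv.ofBijective _ (ghToPQ_bij m)).symm.trans (ghEquivMZ m)

end Stmt17
namespace Stmt17

def allW : ℕ → Finset (List (Fin 4))
  | 0 => {[]}
  | (m+1) => (allW m).biUnion (fun w => Finset.image (fun c => w ++ [c]) Finset.univ)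

lemma mem_allW : ∀ {m : ℕ} {w : List (Fin 4)}, w ∈ allW m ↔ w.length = m := by
  intro m
  induction m with
  | zero =>
    intro w
    simp [allW, List.length_eq_zero_iff]
  | succ m ih =>
    intro w
    simp only [allW, Finset.mem_biUnion, Finset.mem_image, Finset.mem_univ, true_and]
    constructor
    · rintro ⟨y, hy, c, rfl⟩
      have := ih.mp hy
      simp [this]
    · intro hlw
      rcases List.eq_nil_or_concat w with rfl | ⟨y, c, rfl⟩
      · simp at hlw
      · rw [List.concat_eq_append] at hlw ⊢
        simp at hlw
        exact ⟨y, ih.mpr (by omega), c, rfl⟩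

open Classical in
noncomputable def Mz (m k : ℕ) : Finset (List (Fin 4)) :=
  (allW m).filter (fun w => IsBicoloredMotzkin w ∧ w.count 0 = w.count 1 + k)

open Classical in
lemma mem_Mz {m k : ℕ} {w : List (Fin 4)} :
    w ∈ Mz m k ↔ w.length = m ∧ IsBicoloredMotzkin w ∧ w.count 0 = w.count 1 + k := by
  simp [Mz, Finset.mem_filter, mem_allW]

lemma motz_nil : IsBicoloredMotzkin [] := by
  intro q hq
  rw [List.prefix_nil.mp hq]
  simp

lemma motz_self {w : List (Fin 4)} (h : IsBicoloredMotzkin w) : w.count 1 ≤ w.count 0 :=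
  h w (List.prefix_refl w)

lemma cnt_app (a c : Fin 4) (y : List (Fin 4)) :
    (y ++ [c]).count a = y.count a + (if c = a then 1 else 0) := by
  simp [List.count_append, List.count_singleton]

lemma motz_concat {w : List (Fin 4)} {c : Fin 4} :
    IsBicoloredMotzkin (w ++ [c])
      ↔ IsBicoloredMotzkin w ∧ (c = 1 → w.count 1 + 1 ≤ w.count 0) := by
  constructor
  · intro h
    constructor
    · intro q hq
      exact h q (hq.trans (List.prefix_append w [c]))
    · intro hc
      subst hc
      have := h (w ++ [1]) (List.prefix_refl _)
      rw [cnt_app, cnt_app, if_pos rfl, if_neg (by decide)] at this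
      omega
  · rintro ⟨hm, hc⟩ q hq
    rcases List.prefix_concat_iff.mp hq with rfl | hq'
    · rw [cnt_app, cnt_app]
      have h1 := motz_self hm
      have hc4 : ∀ x : Fin 4, x = 0 ∨ x = 1 ∨ x = 2 ∨ x = 3 := by decide
      rcases hc4 c with rfl | rfl | rfl | rfl
      · rw [if_neg (by decide), if_pos rfl]
        omega
      · rw [if_pos rfl, if_neg (by decide)]
        have := hc rfl
        omega
      · rw [if_neg (by decide), if_neg (by decide)]
        omega
      · rw [if_neg (by decide), if_neg (by decide)]
        omega
    · exact hm q hq'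

lemma Mz_empty {m k : ℕ} (h : m < k) : Mz m k = ∅ := by
  apply Finset.eq_empty_of_forall_notMem
  intro w hw
  rw [mem_Mz] at hw
  have : w.count 0 ≤ w.length := List.count_le_length
  omega

lemma Mz_zero_zero : Mz 0 0 = {[]} := by
  ext w
  rw [mem_Mz]
  simp [List.length_eq_zero_iff]
  intro hw
  subst hw
  simp [motz_nil]

lemma append_single_injective (c : Fin 4) : Function.Injective (fun y => y ++ [c]) := by
  intro a b hab
  simpa using (List.append_inj' hab rfl).1

lemma Mz_succ (m k : ℕ) :
    Mz (m+1) k = ((Mz m (k+1)).image (· ++ [(1:Fin 4)])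
        ∪ (Mz m k).image (· ++ [(2:Fin 4)])
        ∪ (Mz m k).image (· ++ [(3:Fin 4)]))
      ∪ (if k = 0 then (∅ : Finset (List (Fin 4)))
          else (Mz m (k-1)).image (· ++ [(0:Fin 4)])) := by
  classical
  ext w
  constructor
  · intro hw
    rw [mem_Mz] at hw
    obtain ⟨hlen, hmz, hcnt⟩ := hw
    rcases List.eq_nil_or_concat w with rfl | ⟨y, c, rfl⟩
    · simp at hlen
    rw [List.concat_eq_append] at hlen hmz hcnt ⊢
    obtain ⟨hmy, himp⟩ := motz_concat.mp hmz
    have hylen : y.length = m := by simp at hlen; omega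
    have hc1 := motz_self hmy
    rw [cnt_app, cnt_app] at hcnt
    have hc4 : ∀ x : Fin 4, x = 0 ∨ x = 1 ∨ x = 2 ∨ x = 3 := by decide
    rcases hc4 c with rfl | rfl | rfl | rfl
    · rw [if_pos rfl, if_neg (by decide)] at hcnt
      have hk : k ≠ 0 := by omega
      refine Finset.mem_union_right _ ?_
      rw [if_neg hk]
      exact Finset.mem_image.mpr ⟨y, mem_Mz.mpr ⟨hylen, hmy, by omega⟩, rfl⟩
    · rw [if_neg (by decide), if_pos rfl] at hcnt
      refine Finset.mem_union_left _ (Finset.mem_union_left _ (Finset.mem_union_left _ ?_))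
      exact Finset.mem_image.mpr ⟨y, mem_Mz.mpr ⟨hylen, hmy, by omega⟩, rfl⟩
    · rw [if_neg (by decide), if_neg (by decide)] at hcnt
      refine Finset.mem_union_left _ (Finset.mem_union_left _ (Finset.mem_union_right _ ?_))
      exact Finset.mem_image.mpr ⟨y, mem_Mz.mpr ⟨hylen, hmy, by omega⟩, rfl⟩
    · rw [if_neg (by decide), if_neg (by decide)] at hcnt
      refine Finset.mem_union_left _ (Finset.mem_union_right _ ?_)
      exact Finset.mem_image.mpr ⟨y, mem_Mz.mpr ⟨hylen, hmy, by omega⟩, rfl⟩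
  · intro hw
    rw [mem_Mz]
    rcases Finset.mem_union.mp hw with hl | hr
    · rcases Finset.mem_union.mp hl with hl2 | h3
      · rcases Finset.mem_union.mp hl2 with h1 | h2
        · obtain ⟨y, hy, rfl⟩ := Finset.mem_image.mp h1
          rw [mem_Mz] at hy
          obtain ⟨hyl, hym, hyc⟩ := hy
          refine ⟨by simp [hyl], motz_concat.mpr ⟨hym, fun _ => by omega⟩, ?_⟩
          rw [cnt_app, cnt_app, if_neg (by decide), if_pos rfl]
          omega
        · obtain ⟨y, hy, rfl⟩ := Finset.mem_image.mp h2
          rw [mem_Mz] at hy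
          obtain ⟨hyl, hym, hyc⟩ := hy
          refine ⟨by simp [hyl], motz_concat.mpr ⟨hym, fun hh => absurd hh (by decide)⟩, ?_⟩
          rw [cnt_app, cnt_app, if_neg (by decide), if_neg (by decide)]
          omega
      · obtain ⟨y, hy, rfl⟩ := Finset.mem_image.mp h3
        rw [mem_Mz] at hy
        obtain ⟨hyl, hym, hyc⟩ := hy
        refine ⟨by simp [hyl], motz_concat.mpr ⟨hym, fun hh => absurd hh (by decide)⟩, ?_⟩
        rw [cnt_app, cnt_app, if_neg (by decide), if_neg (by decide)]
        omega
    · rcases Nat.eq_zero_or_pos k with rfl | hk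
      · rw [if_pos rfl] at hr
        simp at hr
      · rw [if_neg (by omega)] at hr
        obtain ⟨y, hy, rfl⟩ := Finset.mem_image.mp hr
        rw [mem_Mz] at hy
        obtain ⟨hyl, hym, hyc⟩ := hy
        refine ⟨by simp [hyl], motz_concat.mpr ⟨hym, fun hh => absurd hh (by decide)⟩, ?_⟩
        rw [cnt_app, cnt_app, if_pos rfl, if_neg (by decide)]
        omega

lemma card_Mz_succ (m k : ℕ) :
    (Mz (m+1) k).card = (Mz m (k+1)).card + 2 * (Mz m k).card
      + (if k = 0 then 0 else (Mz m (k-1)).card) := by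
  classical
  rw [Mz_succ]
  have hdisj : ∀ (s t : Finset (List (Fin 4))) (a b : Fin 4), a ≠ b →
      Disjoint (s.image (· ++ [a])) (t.image (· ++ [b])) := by
    intro s t a b hab
    rw [Finset.disjoint_left]
    rintro x hx hy
    obtain ⟨y1, _, h1⟩ := Finset.mem_image.mp hx
    obtain ⟨y2, _, h2⟩ := Finset.mem_image.mp hy
    apply hab
    have := h1.trans h2.symm
    simpa using (List.append_inj' this rfl).2
  have c1 : ((Mz m (k+1)).image (· ++ [(1:Fin 4)]) ∪ (Mz m k).image (· ++ [(2:Fin 4)])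
      ∪ (Mz m k).image (· ++ [(3:Fin 4)])).card
      = (Mz m (k+1)).card + (Mz m k).card + (Mz m k).card := by
    rw [Finset.card_union_of_disjoint, Finset.card_union_of_disjoint]
    · rw [Finset.card_image_of_injective _ (append_single_injective 1),
        Finset.card_image_of_injective _ (append_single_injective 2),
        Finset.card_image_of_injective _ (append_single_injective 3)]
    · exact hdisj _ _ _ _ (by decide)
    · rw [Finset.disjoint_union_left]
      exact ⟨hdisj _ _ _ _ (by decide), hdisj _ _ _ _ (by decide)⟩
  rcases Nat.eq_zero_or_pos k with rfl | hk
  · rw [if_pos rfl, if_pos rfl, Finset.union_empty, c1]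
    omega
  · rw [if_neg (by omega), if_neg (by omega)]
    rw [Finset.card_union_of_disjoint, c1,
      Finset.card_image_of_injective _ (append_single_injective 0)]
    · omega
    · rw [Finset.disjoint_union_left, Finset.disjoint_union_left]
      exact ⟨⟨hdisj _ _ _ _ (by decide), hdisj _ _ _ _ (by decide)⟩,
        hdisj _ _ _ _ (by decide)⟩

end Stmt17
namespace Stmt17

lemma choose_two_step (N r : ℕ) :
    Nat.choose (N+2) (r+2) = Nat.choose N (r+2) + 2 * Nat.choose N (r+1) + Nat.choose N r := by
  have e1 : Nat.choose (N+2) (r+2) = Nat.choose (N+1) (r+1) + Nat.choose (N+1) (r+2) := rfl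
  have e2 : Nat.choose (N+1) (r+1) = Nat.choose N r + Nat.choose N (r+1) := rfl
  have e3 : Nat.choose (N+1) (r+2) = Nat.choose N (r+1) + Nat.choose N (r+2) := rfl
  omega

lemma Mz_card : ∀ m k, k ≤ m →
    (Mz m k).card + Nat.choose (2*m+1) (m+k+2) = Nat.choose (2*m+1) (m-k) := by
  intro m
  induction m with
  | zero =>
    intro k hk
    interval_cases k
    rw [Mz_zero_zero]
    decide
  | succ m IH =>
    intro k hk
    rcases Nat.eq_zero_or_pos k with rfl | hkpos
    · -- k = 0
      have hrec := card_Mz_succ m 0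
      rw [if_pos rfl] at hrec
      rw [show (0:ℕ)+1 = 1 by omega] at hrec
      rw [show 2*(m+1)+1 = 2*m+3 by ring, show (m+1)+0+2 = m+3 by omega,
        show (m+1)-0 = m+1 by omega]
      rcases Nat.eq_zero_or_pos m with rfl | hm
      · rw [Mz_empty (m := 0) (k := 1) (by omega), Mz_zero_zero] at hrec
        simp at hrec
        rw [hrec]
        decide
      · have IH0 := IH 0 (by omega)
        have IH1 := IH 1 (by omega)
        rw [show m+0+2 = m+2 by omega, show m-0 = m by omega] at IH0
        rw [show m+1+2 = m+3 by omega] at IH1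
        have P1 := choose_two_step (2*m+1) (m-1)
        rw [show m-1+2 = m+1 by omega, show m-1+1 = m by omega,
          show 2*m+1+2 = 2*m+3 by omega] at P1
        have P2 := choose_two_step (2*m+1) (m+1)
        rw [show m+1+2 = m+3 by omega, show m+1+1 = m+2 by omega,
          show 2*m+1+2 = 2*m+3 by omega] at P2
        omega
    · -- k ≥ 1
      obtain ⟨k', rfl⟩ : ∃ k', k = k' + 1 := ⟨k - 1, by omega⟩
      have hrec := card_Mz_succ m (k'+1)
      rw [if_neg (by omega), show k'+1-1 = k' by omega,
        show k'+1+1 = k'+2 by omega] at hrec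
      rw [show 2*(m+1)+1 = 2*m+3 by ring, show (m+1)+(k'+1)+2 = m+k'+4 by omega,
        show (m+1)-(k'+1) = m-k' by omega]
      rcases Nat.lt_trichotomy (k'+1) m with hlt | heq | hgt
      · -- generic case: k' + 2 ≤ m
        have IHa := IH k' (by omega)
        have IHb := IH (k'+1) (by omega)
        have IHc := IH (k'+2) (by omega)
        rw [show m+(k'+1)+2 = m+k'+3 by omega, show m-(k'+1) = m-k'-1 by omega] at IHb
        rw [show m+(k'+2)+2 = m+k'+4 by omega, show m-(k'+2) = m-k'-2 by omega] at IHc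
        have P1 := choose_two_step (2*m+1) (m-k'-2)
        rw [show m-k'-2+2 = m-k' by omega, show m-k'-2+1 = m-k'-1 by omega,
          show 2*m+1+2 = 2*m+3 by omega] at P1
        have P2 := choose_two_step (2*m+1) (m+k'+2)
        rw [show m+k'+2+2 = m+k'+4 by omega, show m+k'+2+1 = m+k'+3 by omega,
          show 2*m+1+2 = 2*m+3 by omega] at P2
        omega
      · -- k' + 1 = m
        subst heq
        have IHa := IH k' (by omega)
        have IHb := IH (k'+1) (by omega)
        rw [show (k'+1)+k'+2 = 2*k'+3 by omega, show 2*(k'+1)+1 = 2*k'+3 by omega,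
          show (k'+1)-k' = 1 by omega] at IHa
        rw [show (k'+1)+(k'+1)+2 = 2*k'+4 by omega, show 2*(k'+1)+1 = 2*k'+3 by omega,
          show (k'+1)-(k'+1) = 0 by omega] at IHb
        rw [Mz_empty (m := k'+1) (k := k'+2) (by omega)] at hrec
        have c1 : Nat.choose (2*k'+3) (2*k'+3) = 1 := Nat.choose_self _
        have c2 : Nat.choose (2*k'+3) 1 = 2*k'+3 := Nat.choose_one_right _
        have c3 : Nat.choose (2*k'+3) (2*k'+4) = 0 := Nat.choose_eq_zero_of_lt (by omega)
        have c4 : Nat.choose (2*k'+3) 0 = 1 := Nat.choose_zero_right _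
        rw [show 2*(k'+1)+3 = 2*k'+5 by omega, show (k'+1)+k'+4 = 2*k'+5 by omega,
          show (k'+1)-k' = 1 by omega]
        have c5 : Nat.choose (2*k'+5) (2*k'+5) = 1 := Nat.choose_self _
        have c6 : Nat.choose (2*k'+5) 1 = 2*k'+5 := Nat.choose_one_right _
        simp only [Finset.card_empty] at hrec
        omega
      · -- k' = m
        have hk'm : k' = m := by omega
        subst hk'm
        have IHb := IH k' (by omega)
        rw [show k'+k'+2 = 2*k'+2 by omega, show 2*k'+1+0 = 2*k'+1 by omega,
          show k'-k' = 0 by omega] at IHb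
        have c3 : Nat.choose (2*k'+1) (2*k'+2+1) = 0 := Nat.choose_eq_zero_of_lt (by omega)
        have c3' : Nat.choose (2*k'+1) (2*k'+2) = 0 := Nat.choose_eq_zero_of_lt (by omega)
        have c4 : Nat.choose (2*k'+1) 0 = 1 := Nat.choose_zero_right _
        rw [Mz_empty (m := k') (k := k'+2) (by omega),
          Mz_empty (m := k') (k := k'+1) (by omega)] at hrec
        simp only [Finset.card_empty] at hrec
        rw [show k'+k'+4 = 2*k'+4 by omega, show k'-k' = 0 by omega]
        have c5 : Nat.choose (2*k'+3) (2*k'+4) = 0 := Nat.choose_eq_zero_of_lt (by omega)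
        have c6 : Nat.choose (2*k'+3) 0 = 1 := Nat.choose_zero_right _
        omega

open Classical in
lemma card_Mz_total (m : ℕ) :
    ((allW m).filter (fun w => IsBicoloredMotzkin w)).card
      = ∑ k ∈ Finset.range (m+1), (Mz m k).card := by
  rw [Finset.card_eq_sum_card_fiberwise
    (f := fun w => w.count 0 - w.count 1) (t := Finset.range (m+1))]
  · apply Finset.sum_congr rfl
    intro k _
    congr 1
    ext w
    simp only [Finset.mem_filter, mem_Mz, mem_allW]
    constructor
    · rintro ⟨⟨hl, hm⟩, hk⟩
      have := motz_self hm
      exact ⟨hl, hm, by omega⟩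
    · rintro ⟨hl, hm, hk⟩
      exact ⟨⟨hl, hm⟩, by omega⟩
  · intro w hw
    rw [Finset.mem_coe, Finset.mem_filter, mem_allW] at hw
    rw [Finset.mem_coe, Finset.mem_range]
    beta_reduce
    have : w.count 0 ≤ w.length := List.count_le_length
    omega

lemma sum_Mz_card (m : ℕ) :
    ∑ k ∈ Finset.range (m+1), (Mz m k).card = Nat.choose (2*m+1) m := by
  have h1 : (∑ k ∈ Finset.range (m+1), (Mz m k).card)
      + ∑ k ∈ Finset.range (m+1), Nat.choose (2*m+1) (m+k+2)
      = ∑ k ∈ Finset.range (m+1), Nat.choose (2*m+1) (m-k) := by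
    rw [← Finset.sum_add_distrib]
    apply Finset.sum_congr rfl
    intro k hk
    rw [Finset.mem_range] at hk
    exact Mz_card m k (by omega)
  have h2 : ∑ k ∈ Finset.range (m+1), Nat.choose (2*m+1) (m-k)
      = ∑ j ∈ Finset.range (m+1), Nat.choose (2*m+1) j := by
    have := Finset.sum_range_reflect (fun j => Nat.choose (2*m+1) j) (m+1)
    simpa using this
  have h3 : ∑ k ∈ Finset.range (m+1), Nat.choose (2*m+1) (m+k+2)
      = ∑ k ∈ Finset.range m, Nat.choose (2*m+1) (m+k+2) := by
    rw [Finset.sum_range_succ]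
    have : Nat.choose (2*m+1) (m+m+2) = 0 := Nat.choose_eq_zero_of_lt (by omega)
    rw [this, Nat.add_zero]
  have h4 : ∑ k ∈ Finset.range m, Nat.choose (2*m+1) (m+k+2)
      = ∑ k ∈ Finset.range m, Nat.choose (2*m+1) (m-1-k) := by
    apply Finset.sum_congr rfl
    intro k hk
    rw [Finset.mem_range] at hk
    rw [show m-1-k = (2*m+1)-(m+k+2) by omega]
    rw [Nat.choose_symm (by omega)]
  have h5 : ∑ k ∈ Finset.range m, Nat.choose (2*m+1) (m-1-k)
      = ∑ j ∈ Finset.range m, Nat.choose (2*m+1) j :=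
    Finset.sum_range_reflect _ m
  have h6 : ∑ j ∈ Finset.range (m+1), Nat.choose (2*m+1) j
      = (∑ j ∈ Finset.range m, Nat.choose (2*m+1) j) + Nat.choose (2*m+1) m :=
    Finset.sum_range_succ _ m
  omega

open Classical in
lemma motzSet_card (m : ℕ) :
    {w : List (Fin 4) | w.length = m ∧ IsBicoloredMotzkin w}.ncard
      = Nat.choose (2*m+1) m := by
  have hset : {w : List (Fin 4) | w.length = m ∧ IsBicoloredMotzkin w}
      = ↑((allW m).filter (fun w => IsBicoloredMotzkin w)) := by
    ext w
    constructor
    · rintro ⟨h1, h2⟩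
      exact Finset.mem_filter.mpr ⟨mem_allW.mpr h1, h2⟩
    · intro h
      obtain ⟨h1, h2⟩ := Finset.mem_filter.mp h
      exact ⟨mem_allW.mp h1, h2⟩
  rw [hset, Set.ncard_coe_finset, card_Mz_total, sum_Mz_card]

end Stmt17

/-- Intervals in `F_n^∞` are in bijection with bicolored Motzkin paths of length `n-1`;
in particular, the number of such bicolored Motzkin paths of length `n-1` is `C(2n-1, n)`. -/
theorem stmt17 (n : ℕ) (hn : 1 ≤ n) :
    Nonempty
      ({pq : List Bool × List Bool //
          pq.1 ∈ Fninf n ∧ pq.2 ∈ Fninf n ∧ StanleyLE pq.1 pq.2} ≃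
        {w : List (Fin 4) // w.length = n - 1 ∧ IsBicoloredMotzkin w}) ∧
    {w : List (Fin 4) | w.length = n - 1 ∧ IsBicoloredMotzkin w}.ncard
      = Nat.choose (2 * n - 1) n := by
  obtain ⟨m, rfl⟩ : ∃ m, n = m + 1 := ⟨n - 1, by omega⟩
  constructor
  · exact ⟨Stmt17.pqEquivMZ m⟩
  · have hidx : m + 1 - 1 = m := by omega
    rw [hidx, Stmt17.motzSet_card m]
    rw [show 2 * (m+1) - 1 = 2*m+1 by omega]
    rw [show m + 1 = 2*m+1 - m by omega]
    exact (Nat.choose_symm (by omega)).symm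
end

section
/- The map sending a subset A of {1,...,n-1} to the sum of its elements is the rank function of the lattice F_n^∞; in particular the maximal rank (the rank of the lattice F_n^∞) is n(n-1)/2. Moreover, complementation A ↦ {1,...,n-1} \ A is an order-reversing involution on F_n^∞: A is covered by B if and only if the complement of B is covered by the complement of A. -/
/-!
A cover either adds `1` or moves some `x` to `x + 1`; both raise the element sum by exactly one.
Complementing inside `{1,…,n-1}` turns "add `1`" into "remove `1`" and "move `x` to `x + 1`"
into "move `x + 1` back to `x`", so it exchanges the two ends of every cover; since
complementation is an involution, the converse follows by applying this to the complements.
-/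

/-- The cover relation of the lattice `F_n^∞` realized on the power set of `{1,…,n-1}`:
`A ⋖ B` iff either `1 ∉ A` and `B = A ∪ {1}`, or `B = (A \ {x}) ∪ {x+1}` for some
`x ∈ A` with `x + 1 ∉ A`. -/
def SubsetCov (n : ℕ) (A B : Finset ℕ) : Prop :=
  A ⊆ Finset.Icc 1 (n - 1) ∧ B ⊆ Finset.Icc 1 (n - 1) ∧
    ((1 ∉ A ∧ B = insert 1 A) ∨
      ∃ x ∈ A, x + 1 ∉ A ∧ B = insert (x + 1) (A.erase x))

open Finset

theorem sum_Icc_one_pred_id (n : ℕ) : ∑ x ∈ Icc 1 (n - 1), x = n * (n - 1) / 2 := by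
  rw [← sum_range_id]
  refine sum_subset (fun x hx => ?_) (fun x hx hx' => ?_)
  · simp only [mem_Icc, mem_range] at hx ⊢; omega
  · simp only [mem_Icc, mem_range] at hx hx'; omega

theorem Finset.insert_sdiff_insert_of_mem_of_notMem {α : Type*} [DecidableEq α]
    {U A : Finset α} {a : α} (haU : a ∈ U) (haA : a ∉ A) :
    insert a (U \ insert a A) = U \ A := by
  rw [sdiff_insert, insert_erase (mem_sdiff.2 ⟨haU, haA⟩)]

theorem Finset.insert_erase_sdiff_insert_erase {α : Type*} [DecidableEq α]
    {U A : Finset α} {a b : α} (haA : a ∈ A) (hbU : b ∈ U) (hbA : b ∉ A) :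
    insert b ((U \ insert b (A.erase a)).erase a) = U \ A := by
  ext y
  simp only [mem_insert, mem_erase, mem_sdiff]
  grind

namespace SubsetCov

variable {n : ℕ} {A B : Finset ℕ}

theorem sum_eq_sum_add_one (h : SubsetCov n A B) : ∑ x ∈ B, x = (∑ x ∈ A, x) + 1 := by
  obtain ⟨-, -, ⟨h1, rfl⟩ | ⟨x, hx, hx1, rfl⟩⟩ := h
  · rw [sum_insert h1, add_comm]
  · rw [sum_insert (fun h => hx1 (mem_of_mem_erase h)), ← add_sum_erase A (fun y => y) hx]
    omega

theorem sdiff (h : SubsetCov n A B) :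
    SubsetCov n (Icc 1 (n - 1) \ B) (Icc 1 (n - 1) \ A) := by
  obtain ⟨hA, hB, hcov⟩ := h
  refine ⟨sdiff_subset, sdiff_subset, ?_⟩
  rcases hcov with ⟨h1, rfl⟩ | ⟨x, hx, hx1, rfl⟩
  · have h1U : 1 ∈ Icc 1 (n - 1) := hB (mem_insert_self 1 A)
    exact .inl ⟨by simp, (insert_sdiff_insert_of_mem_of_notMem h1U h1).symm⟩
  · have hx1U : x + 1 ∈ Icc 1 (n - 1) := hB (mem_insert_self _ _)
    refine .inr ⟨x, ?_, by simp, (insert_erase_sdiff_insert_erase hx hx1U hx1).symm⟩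
    simp [hA hx]

theorem iff_sdiff (hA : A ⊆ Icc 1 (n - 1)) (hB : B ⊆ Icc 1 (n - 1)) :
    SubsetCov n A B ↔ SubsetCov n (Icc 1 (n - 1) \ B) (Icc 1 (n - 1) \ A) := by
  refine ⟨sdiff, fun h => ?_⟩
  simpa only [Finset.sdiff_sdiff_eq_self hA, Finset.sdiff_sdiff_eq_self hB] using h.sdiff

end SubsetCov

/-- The map `A ↦ Σ_{x∈A} x` is the rank function of `F_n^∞` (it increases by one along
covers); the maximal rank is `n(n-1)/2`; and complementation is an order-reversing
involution: `A ⋖ B ↔ Bᶜ ⋖ Aᶜ`. -/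
theorem stmt18 (n : ℕ) :
    (∀ A B : Finset ℕ, SubsetCov n A B → ∑ x ∈ B, x = (∑ x ∈ A, x) + 1) ∧
    (∑ x ∈ Finset.Icc 1 (n - 1), x = n * (n - 1) / 2) ∧
    (∀ A B : Finset ℕ, A ⊆ Finset.Icc 1 (n - 1) → B ⊆ Finset.Icc 1 (n - 1) →
      (SubsetCov n A B ↔
        SubsetCov n (Finset.Icc 1 (n - 1) \ B) (Finset.Icc 1 (n - 1) \ A))) :=
  ⟨fun _ _ h => h.sum_eq_sum_add_one, sum_Icc_one_pred_id n,
    fun _ _ hA hB => SubsetCov.iff_sdiff hA hB⟩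
end
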